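/- There exists M₀ > 0 with the following property. Let V₁, V₂ ⊂ ℝ² be the vertex sets of two regular pentagons of side length 1 such that ‖p−q‖ ≥ M for all p ∈ V₁, q ∈ V₂, where M ≥ M₀, and let D = V₁ ∪ V₂ (a set of 10 points). Then the minimum, over all partitions of D into at most 5 nonempty clusters, of the total cost Σ_C w_C equals (16+√5)/6, where for a nonempty finite cluster C the cost is w_C = (1/(2|C|))·Σ_{p∈C} Σ_{q∈C} ‖p−q‖². -/

import Mathlib

noncomputable instance : DecidableEq (EuclideanSpace ℝ (Fin 2)) :=
  Classical.decEq _

/-- The vertices of the standard regular pentagon with side length 1 in the plane. -/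
noncomputable def pentagonVertex (m : Fin 5) : EuclideanSpace ℝ (Fin 2) :=
  (1 / (2 * Real.sin (Real.pi / 5))) •
    (WithLp.equiv 2 (Fin 2 → ℝ)).symm
      ![Real.cos (2 * Real.pi * (m : ℕ) / 5), Real.sin (2 * Real.pi * (m : ℕ) / 5)]

/-- `V` is the vertex set of a regular pentagon with side length 1, i.e. a congruent copy
of the standard one. -/
def IsUnitRegularPentagon (V : Finset (EuclideanSpace ℝ (Fin 2))) : Prop :=
  ∃ φ : EuclideanSpace ℝ (Fin 2) ≃ᵢ EuclideanSpace ℝ (Fin 2),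
    V = Finset.image (fun m => φ (pentagonVertex m)) Finset.univ

/-- The cost of a cluster `C`: `(1/(2|C|))·Σ_{p∈C} Σ_{q∈C} ‖p−q‖²`, which equals the sum
of squared distances from the points of `C` to their centroid. -/
noncomputable def clusterCost (C : Finset (EuclideanSpace ℝ (Fin 2))) : ℝ :=
  (1 / (2 * (C.card : ℝ))) * ∑ p ∈ C, ∑ q ∈ C, ‖p - q‖ ^ 2

/-- `P` is a partition of `V` into at most `k` nonempty clusters. -/
def IsPartitionIntoAtMost (V : Finset (EuclideanSpace ℝ (Fin 2))) (k : ℕ)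
    (P : Finset (Finset (EuclideanSpace ℝ (Fin 2)))) : Prop :=
  (∀ C ∈ P, C.Nonempty) ∧ (P : Set (Finset (EuclideanSpace ℝ (Fin 2)))).PairwiseDisjoint id ∧
    P.sup id = V ∧ P.card ≤ k

section Aux
open Real Finset

lemma cos2' : Real.cos (2*π/5) = (Real.sqrt 5 - 1)/4 := by
  have h : (2:ℝ)*π/5 = 2*(π/5) := by ring
  rw [h, Real.cos_two_mul, Real.cos_pi_div_five]
  have h5 : Real.sqrt 5 ^2 = 5 := Real.sq_sqrt (by norm_num)
  nlinarith [Real.sqrt_nonneg 5]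
lemma cos4' : Real.cos (4*π/5) = -(1+Real.sqrt 5)/4 := by
  have h : (4:ℝ)*π/5 = 2*(2*π/5) := by ring
  rw [h, Real.cos_two_mul, cos2']
  have h5 : Real.sqrt 5 ^2 = 5 := Real.sq_sqrt (by norm_num)
  nlinarith [Real.sqrt_nonneg 5]
lemma cos6' : Real.cos (6*π/5) = -(1+Real.sqrt 5)/4 := by
  have h : (6:ℝ)*π/5 = 2*π - 4*π/5 := by ring
  rw [h, Real.cos_two_pi_sub, cos4']
lemma cos8' : Real.cos (8*π/5) = (Real.sqrt 5 - 1)/4 := by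
  have h : (8:ℝ)*π/5 = 2*π - 2*π/5 := by ring
  rw [h, Real.cos_two_pi_sub, cos2']

lemma sin_pi5_sq : Real.sin (π/5)^2 = (5 - Real.sqrt 5)/8 := by
  have h := Real.sin_sq_add_cos_sq (π/5)
  rw [Real.cos_pi_div_five] at h
  have h5 : Real.sqrt 5 ^2 = 5 := Real.sq_sqrt (by norm_num)
  nlinarith

lemma pv_dist_sq (i j : Fin 5) :
    ‖pentagonVertex i - pentagonVertex j‖^2 =
      (1 - Real.cos (2*π*(i:ℕ)/5 - 2*π*(j:ℕ)/5)) / (2 * Real.sin (π/5)^2) := by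
  have hs : Real.sin (π/5) > 0 := by
    apply Real.sin_pos_of_pos_of_lt_pi <;> nlinarith [Real.pi_gt_three, Real.pi_lt_d2]
  have hnorm : ∀ x : EuclideanSpace ℝ (Fin 2), ‖x‖^2 = x 0 ^2 + x 1 ^2 := by
    intro x
    rw [EuclideanSpace.norm_eq, Real.sq_sqrt (by positivity)]
    simp [Fin.sum_univ_two, sq_abs]
  rw [hnorm]
  set r := 1 / (2 * Real.sin (π/5)) with hr
  have e0 : ∀ m : Fin 5, (pentagonVertex m) 0 = r * Real.cos (2*π*(m:ℕ)/5) := fun m => rfl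
  have e1 : ∀ m : Fin 5, (pentagonVertex m) 1 = r * Real.sin (2*π*(m:ℕ)/5) := fun m => rfl
  have hsub0 : (pentagonVertex i - pentagonVertex j) 0 = (pentagonVertex i) 0 - (pentagonVertex j) 0 := rfl
  have hsub1 : (pentagonVertex i - pentagonVertex j) 1 = (pentagonVertex i) 1 - (pentagonVertex j) 1 := rfl
  rw [hsub0, hsub1, e0, e0, e1, e1, Real.cos_sub]
  have hci := Real.sin_sq_add_cos_sq (2*π*(i:ℕ)/5)
  have hcj := Real.sin_sq_add_cos_sq (2*π*(j:ℕ)/5)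
  set ci := Real.cos (2*π*(i:ℕ)/5)
  set si := Real.sin (2*π*(i:ℕ)/5)
  set cj := Real.cos (2*π*(j:ℕ)/5)
  set sj := Real.sin (2*π*(j:ℕ)/5)
  have hs2 : Real.sin (π/5)^2 ≠ 0 := by positivity
  field_simp [hr]
  have hr2 : r^2 * (2 * Real.sin (π/5)^2) = 1/2 := by rw [hr]; field_simp <;> ring
  linear_combination ((ci-cj)^2+(si-sj)^2) * hr2 + (1/2 : ℝ) * (hci + hcj)

/-- reduction of the angle difference modulo 2π -/
lemma cos_diff (a b : Fin 5) :
    Real.cos (2*π*(a:ℕ)/5 - 2*π*(b:ℕ)/5) = Real.cos (2*π*(((a - b) : Fin 5):ℕ)/5) := by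
  have hdvd : ∀ a b : Fin 5, (5:ℤ) ∣ (((a:ℕ):ℤ) - ((b:ℕ):ℤ) - (((a-b : Fin 5):ℕ):ℤ)) := by
    decide
  obtain ⟨k, hk⟩ := hdvd a b
  have harg : 2*π*(a:ℕ)/5 - 2*π*(b:ℕ)/5 = 2*π*(((a - b) : Fin 5):ℕ)/5 + k*(2*π) := by
    have : ((a:ℕ):ℝ) - ((b:ℕ):ℝ) - (((a-b : Fin 5):ℕ):ℝ) = 5 * k := by
      exact_mod_cast congrArg (fun z : ℤ => (z:ℝ)) hk
    nlinarith [this, Real.pi_pos]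
  rw [harg, Real.cos_add_int_mul_two_pi]

noncomputable def D (i j : Fin 5) : ℝ :=
  if i - j = 0 then 0 else if i - j = 1 ∨ i - j = 4 then 1 else (3 + Real.sqrt 5)/2

lemma pv_D (φ : EuclideanSpace ℝ (Fin 2) ≃ᵢ EuclideanSpace ℝ (Fin 2)) (i j : Fin 5) :
    ‖φ (pentagonVertex i) - φ (pentagonVertex j)‖^2 = D i j := by
  have hiso : ‖φ (pentagonVertex i) - φ (pentagonVertex j)‖ = ‖pentagonVertex i - pentagonVertex j‖ := by
    rw [← dist_eq_norm, ← dist_eq_norm, φ.dist_eq]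
  rw [hiso, pv_dist_sq, cos_diff]
  have h5 : Real.sqrt 5 ^2 = 5 := Real.sq_sqrt (by norm_num)
  have h5n : Real.sqrt 5 ≥ 0 := Real.sqrt_nonneg 5
  have hspos : (5:ℝ) - Real.sqrt 5 > 0 := by nlinarith
  unfold D
  generalize (i - j : Fin 5) = d
  fin_cases d
  · norm_num
  · norm_num [cos2', sin_pi5_sq]
    field_simp
    ring
  · rw [if_neg (by decide), if_neg (by decide)]
    rw [show 2*π*((2:ℕ):ℝ)/5 = 4*π/5 by push_cast; ring]
    rw [cos4', sin_pi5_sq, div_eq_iff (by positivity)]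
    ring_nf
    nlinarith
  · rw [if_neg (by decide), if_neg (by decide)]
    rw [show 2*π*((3:ℕ):ℝ)/5 = 6*π/5 by push_cast; ring]
    rw [cos6', sin_pi5_sq, div_eq_iff (by positivity)]
    ring_nf
    nlinarith
  · rw [if_neg (by decide), if_pos (by decide)]
    rw [show 2*π*((4:ℕ):ℝ)/5 = 8*π/5 by push_cast; ring]
    rw [cos8', sin_pi5_sq, div_eq_iff (by positivity)]
    ring_nf


def adjCount (S : Finset (Fin 5)) : ℕ :=
  ∑ i ∈ S, ∑ j ∈ S, if i - j = 1 ∨ i - j = 4 then 1 else 0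
lemma adjCount_le (S : Finset (Fin 5)) (h : S.card ≤ 4) : adjCount S ≤ 2*(S.card - 1) := by
  revert h; revert S; decide
lemma adjCount_le10 (S : Finset (Fin 5)) : adjCount S ≤ 10 := by revert S; decide
lemma D_eq (i j : Fin 5) :
    D i j = (3+Real.sqrt 5)/2 * (if i = j then 0 else 1)
      - (1+Real.sqrt 5)/2 * (if i - j = 1 ∨ i - j = 4 then 1 else 0) := by
  unfold D
  rcases eq_or_ne i j with h | h
  · subst h
    rw [if_pos (by simp), if_pos rfl, if_neg (by simp)]
    ring
  · rw [if_neg (fun hc => h (by rwa [sub_eq_zero] at hc)), if_neg h]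
    by_cases h2 : i - j = 1 ∨ i - j = 4
    · rw [if_pos h2, if_pos h2]; ring
    · rw [if_neg h2, if_neg h2]; ring


lemma sum_D (S : Finset (Fin 5)) :
    ∑ i ∈ S, ∑ j ∈ S, D i j
      = (3+Real.sqrt 5)/2 * ((S.card:ℝ)^2 - S.card)
        - (1+Real.sqrt 5)/2 * (adjCount S : ℝ) := by
  have h1 : ∑ i ∈ S, ∑ j ∈ S, (if i = j then (0:ℝ) else 1) = (S.card:ℝ)^2 - S.card := by
    have : ∀ i ∈ S, ∑ j ∈ S, (if i = j then (0:ℝ) else 1)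
        = ∑ j ∈ S, (1 - if i = j then 1 else 0) := by
      intro i _; apply Finset.sum_congr rfl; intro j _; split <;> ring
    rw [Finset.sum_congr rfl this]
    have h2 : ∀ i ∈ S, ∑ j ∈ S, ((1:ℝ) - if i = j then 1 else 0) = S.card - 1 := by
      intro i hi
      rw [Finset.sum_sub_distrib, Finset.sum_const, Finset.sum_ite_eq, if_pos hi]
      simp
    rw [Finset.sum_congr rfl h2, Finset.sum_const]
    simp; ring
  have h2 : ∑ i ∈ S, ∑ j ∈ S, (if i - j = 1 ∨ i - j = 4 then (1:ℝ) else 0)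
      = (adjCount S : ℝ) := by
    unfold adjCount
    push_cast
    apply Finset.sum_congr rfl; intro i _
    apply Finset.sum_congr rfl; intro j _
    split <;> simp
  calc ∑ i ∈ S, ∑ j ∈ S, D i j
      = ∑ i ∈ S, ∑ j ∈ S, ((3+Real.sqrt 5)/2 * (if i = j then 0 else 1)
        - (1+Real.sqrt 5)/2 * (if i - j = 1 ∨ i - j = 4 then 1 else 0)) := by
        simp_rw [D_eq]
    _ = (3+Real.sqrt 5)/2 * (∑ i ∈ S, ∑ j ∈ S, (if i = j then (0:ℝ) else 1))
        - (1+Real.sqrt 5)/2 * (∑ i ∈ S, ∑ j ∈ S, (if i - j = 1 ∨ i - j = 4 then (1:ℝ) else 0)) := by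
        rw [Finset.mul_sum, Finset.mul_sum, ← Finset.sum_sub_distrib]
        apply Finset.sum_congr rfl; intro i _
        rw [Finset.mul_sum, Finset.mul_sum, ← Finset.sum_sub_distrib]
    _ = _ := by rw [h1, h2]


noncomputable def cost' (S : Finset (Fin 5)) : ℝ :=
  (1 / (2 * (S.card : ℝ))) * ∑ i ∈ S, ∑ j ∈ S, D i j


noncomputable def g : ℕ → ℝ
  | 2 => 1/2
  | 3 => (7+Real.sqrt 5)/6
  | 4 => (15+3*Real.sqrt 5)/8
  | 5 => (5+Real.sqrt 5)/2
  | _ => 0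

lemma cost'_ge (S : Finset (Fin 5)) : g S.card ≤ cost' S := by
  have h5 : Real.sqrt 5 ^2 = 5 := Real.sq_sqrt (by norm_num)
  have h5n : (0:ℝ) ≤ Real.sqrt 5 := Real.sqrt_nonneg 5
  have hA0 : (0:ℝ) ≤ (adjCount S : ℝ) := by positivity
  unfold cost'
  rw [sum_D]
  obtain ⟨k, hk⟩ : ∃ k, S.card = k := ⟨_, rfl⟩
  have hc : k ≤ 5 := hk ▸ le_trans (Finset.card_le_univ S) (by simp)
  have hA4 : k ≤ 4 → adjCount S ≤ 2*(k-1) := by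
    intro h
    have := adjCount_le S (by omega)
    omega
  have hA10 := adjCount_le10 S
  rw [hk]
  interval_cases k
  · have : adjCount S = 0 := by have := hA4 (by omega); omega
    rw [this]; norm_num [g]
  · have : adjCount S = 0 := by have := hA4 (by omega); omega
    rw [this]; norm_num [g]
  · have hA : (adjCount S : ℝ) ≤ 2 := by exact_mod_cast hA4 (by omega)
    show g 2 ≤ _
    norm_num [g]; nlinarith
  · have hA : (adjCount S : ℝ) ≤ 4 := by exact_mod_cast hA4 (by omega)
    show g 3 ≤ _
    norm_num [g]; nlinarith
  · have hA : (adjCount S : ℝ) ≤ 6 := by exact_mod_cast hA4 (by omega)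
    show g 4 ≤ _
    norm_num [g]; nlinarith
  · have hA : (adjCount S : ℝ) ≤ 10 := by exact_mod_cast hA10
    show g 5 ≤ _
    norm_num [g]; nlinarith

lemma g_line1 (s : ℕ) (h1 : 1 ≤ s) (h5 : s ≤ 5) : (s:ℝ)/2 - 1/2 ≤ g s := by
  have h5' : Real.sqrt 5 ^2 = 5 := Real.sq_sqrt (by norm_num)
  have h5n : (0:ℝ) ≤ Real.sqrt 5 := Real.sqrt_nonneg 5
  interval_cases s <;> norm_num [g] <;> nlinarith

lemma g_line2 (s : ℕ) (h1 : 1 ≤ s) (h5 : s ≤ 5) :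
    ((4+Real.sqrt 5)*(s:ℝ) - (5+2*Real.sqrt 5))/6 ≤ g s := by
  have h5' : Real.sqrt 5 ^2 = 5 := Real.sq_sqrt (by norm_num)
  have h5n : (0:ℝ) ≤ Real.sqrt 5 := Real.sqrt_nonneg 5
  interval_cases s <;> norm_num [g] <;> nlinarith


lemma D_pos (i j : Fin 5) (h : i ≠ j) : 0 < D i j := by
  unfold D
  rw [if_neg (fun hc => h (by rwa [sub_eq_zero] at hc))]
  split
  · norm_num
  · positivity

lemma psi_inj (φ : EuclideanSpace ℝ (Fin 2) ≃ᵢ EuclideanSpace ℝ (Fin 2)) :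
    Function.Injective (fun m => φ (pentagonVertex m)) := by
  intro i j h
  by_contra hne
  have h2 := pv_D φ i j
  simp only at h
  rw [h, sub_self] at h2
  simp at h2
  exact absurd h2.symm (ne_of_gt (D_pos i j hne))

lemma clusterCost_image (φ : EuclideanSpace ℝ (Fin 2) ≃ᵢ EuclideanSpace ℝ (Fin 2))
    (S : Finset (Fin 5)) :
    clusterCost (S.image (fun m => φ (pentagonVertex m))) = cost' S := by
  unfold clusterCost cost'
  rw [Finset.card_image_of_injective _ (psi_inj φ)]
  congr 1
  rw [Finset.sum_image (fun a _ b _ h => psi_inj φ h)]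
  apply Finset.sum_congr rfl; intro i _
  rw [Finset.sum_image (fun a _ b _ h => psi_inj φ h)]
  apply Finset.sum_congr rfl; intro j _
  exact pv_D φ i j

lemma clusterCost_nonneg (C : Finset (EuclideanSpace ℝ (Fin 2))) : 0 ≤ clusterCost C := by
  unfold clusterCost
  apply mul_nonneg (by positivity)
  apply Finset.sum_nonneg; intro p _
  apply Finset.sum_nonneg; intro q _
  positivity

noncomputable def hfun : ℕ → ℝ
  | 1 => (5+Real.sqrt 5)/2
  | 2 => (10+Real.sqrt 5)/6
  | 3 => 1
  | 4 => 1/2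
  | _ => 0

lemma pent_bound (φ : EuclideanSpace ℝ (Fin 2) ≃ᵢ EuclideanSpace ℝ (Fin 2))
    (Q : Finset (Finset (EuclideanSpace ℝ (Fin 2))))
    (hne : ∀ C ∈ Q, C.Nonempty)
    (hdisj : (Q : Set (Finset (EuclideanSpace ℝ (Fin 2)))).PairwiseDisjoint id)
    (hsup : Q.sup id = Finset.image (fun m => φ (pentagonVertex m)) Finset.univ) :
    hfun Q.card ≤ ∑ C ∈ Q, clusterCost C := by
  set ψ := fun m => φ (pentagonVertex m) with hψ
  set V := Finset.image ψ Finset.univ with hV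
  -- index sets
  set Sf := fun C : Finset (EuclideanSpace ℝ (Fin 2)) => Finset.univ.filter (fun m => ψ m ∈ C)
    with hSf
  have hsub : ∀ C ∈ Q, C ⊆ V := by
    intro C hC
    rw [← hsup]
    exact Finset.le_sup (f := id) hC
  have hCS : ∀ C ∈ Q, C = (Sf C).image ψ := by
    intro C hC
    ext p
    constructor
    · intro hp
      have hpV : p ∈ V := hsub C hC hp
      rw [hV, Finset.mem_image] at hpV
      obtain ⟨m, _, hm⟩ := hpV
      exact Finset.mem_image.mpr ⟨m, Finset.mem_filter.mpr ⟨Finset.mem_univ m, hm ▸ hp⟩, hm⟩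
    · intro hp
      obtain ⟨m, hm, hm2⟩ := Finset.mem_image.mp hp
      exact hm2 ▸ (Finset.mem_filter.mp hm).2
  have hcard : ∀ C ∈ Q, C.card = (Sf C).card := by
    intro C hC
    conv_lhs => rw [hCS C hC]
    rw [Finset.card_image_of_injective _ (psi_inj φ)]
  have hcost : ∀ C ∈ Q, clusterCost C = cost' (Sf C) := by
    intro C hC
    conv_lhs => rw [hCS C hC]
    rw [clusterCost_image]
  have hcard1 : ∀ C ∈ Q, 1 ≤ (Sf C).card := by
    intro C hC
    rw [← hcard C hC]
    exact Finset.card_pos.mpr (hne C hC)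
  have hcard5 : ∀ C ∈ Q, (Sf C).card ≤ 5 := by
    intro C hC
    exact le_trans (Finset.card_le_univ _) (by simp)
  -- total size is 5
  have hsum5 : ∑ C ∈ Q, ((Sf C).card : ℝ) = 5 := by
    have h1 : ∑ C ∈ Q, C.card = V.card := by
      rw [← hsup, Finset.sup_eq_biUnion, Finset.card_biUnion]
      · rfl
      · intro x hx y hy hxy
        exact hdisj hx hy hxy
    have h2 : V.card = 5 := by
      rw [hV, Finset.card_image_of_injective _ (psi_inj φ)]
      simp
    have h3 : ∑ C ∈ Q, (Sf C).card = 5 := by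
      rw [← Finset.sum_congr rfl hcard, h1, h2]
    exact_mod_cast h3
  -- generic line bound
  have line : ∀ a b : ℝ, (∀ s : ℕ, 1 ≤ s → s ≤ 5 → a * s + b ≤ g s) →
      a * 5 + b * Q.card ≤ ∑ C ∈ Q, clusterCost C := by
    intro a b hab
    have : ∑ C ∈ Q, clusterCost C ≥ ∑ C ∈ Q, (a * ((Sf C).card : ℝ) + b) := by
      apply Finset.sum_le_sum
      intro C hC
      rw [hcost C hC]
      exact le_trans (hab _ (hcard1 C hC) (hcard5 C hC)) (cost'_ge (Sf C))
    rw [Finset.sum_add_distrib, ← Finset.mul_sum, hsum5, Finset.sum_const] at this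
    simpa [mul_comm] using this
  obtain ⟨k, hk⟩ : ∃ k, Q.card = k := ⟨_, rfl⟩
  rw [hk]
  have h5 : Real.sqrt 5 ^2 = 5 := Real.sq_sqrt (by norm_num)
  have h5n : (0:ℝ) ≤ Real.sqrt 5 := Real.sqrt_nonneg 5
  match k with
  | 0 => exact Finset.sum_nonneg (fun C _ => clusterCost_nonneg C)
  | 1 =>
    have := line ((4+Real.sqrt 5)/6) (-(5+2*Real.sqrt 5)/6)
      (fun s h1 h5' => by have := g_line2 s h1 h5'; linarith)
    rw [hk] at this
    show hfun 1 ≤ _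
    unfold hfun
    push_cast at this ⊢
    linarith
  | 2 =>
    have := line ((4+Real.sqrt 5)/6) (-(5+2*Real.sqrt 5)/6)
      (fun s h1 h5' => by have := g_line2 s h1 h5'; linarith)
    rw [hk] at this
    show hfun 2 ≤ _
    unfold hfun
    push_cast at this ⊢
    linarith
  | 3 =>
    have := line (1/2) (-1/2) (fun s h1 h5' => by have := g_line1 s h1 h5'; linarith)
    rw [hk] at this
    show hfun 3 ≤ _
    unfold hfun
    push_cast at this ⊢
    linarith
  | 4 =>
    have := line (1/2) (-1/2) (fun s h1 h5' => by have := g_line1 s h1 h5'; linarith)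
    rw [hk] at this
    show hfun 4 ≤ _
    unfold hfun
    push_cast at this ⊢
    linarith
  | (n+5) =>
    show hfun (n+5) ≤ _
    have : hfun (n+5) = 0 := by unfold hfun; rfl
    rw [this]
    exact Finset.sum_nonneg (fun C _ => clusterCost_nonneg C)


lemma hfun_comb (k₁ k₂ : ℕ) (h1 : 1 ≤ k₁) (h2 : 1 ≤ k₂) (h : k₁ + k₂ ≤ 5) :
    (16+Real.sqrt 5)/6 ≤ hfun k₁ + hfun k₂ := by
  have h5n : (0:ℝ) ≤ Real.sqrt 5 := Real.sqrt_nonneg 5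
  have h4 : k₁ ≤ 4 := by omega
  have h4' : k₂ ≤ 4 := by omega
  interval_cases k₁ <;> interval_cases k₂ <;> unfold hfun <;> norm_num <;> linarith

lemma cost'_val (S : Finset (Fin 5)) (c a : ℕ) (hc : S.card = c) (ha : adjCount S = a) :
    cost' S = (1/(2*(c:ℝ))) * ((3+Real.sqrt 5)/2 * ((c:ℝ)^2 - c) - (1+Real.sqrt 5)/2 * a) := by
  unfold cost'
  rw [sum_D, hc, ha]

set_option maxHeartbeats 1000000 in
lemma upper_bound (φ₁ φ₂ : EuclideanSpace ℝ (Fin 2) ≃ᵢ EuclideanSpace ℝ (Fin 2))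
    (V₁ V₂ : Finset (EuclideanSpace ℝ (Fin 2)))
    (hV₁ : V₁ = Finset.image (fun m => φ₁ (pentagonVertex m)) Finset.univ)
    (hV₂ : V₂ = Finset.image (fun m => φ₂ (pentagonVertex m)) Finset.univ)
    (hdisjV : Disjoint V₁ V₂) :
    ∃ P, IsPartitionIntoAtMost (V₁ ∪ V₂) 5 P ∧
      ∑ C ∈ P, clusterCost C = (16+Real.sqrt 5)/6 := by
  set ψ₁ := fun m => φ₁ (pentagonVertex m) with hψ₁
  set ψ₂ := fun m => φ₂ (pentagonVertex m) with hψ₂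
  set A1 := Finset.image ψ₁ ({0,1,2} : Finset (Fin 5)) with hA1
  set A2 := Finset.image ψ₁ ({3,4} : Finset (Fin 5)) with hA2
  set B1 := Finset.image ψ₂ ({0,1} : Finset (Fin 5)) with hB1
  set B2 := Finset.image ψ₂ ({2,3} : Finset (Fin 5)) with hB2
  set B3 := Finset.image ψ₂ ({4} : Finset (Fin 5)) with hB3
  have hA1V : A1 ⊆ V₁ := by rw [hA1, hV₁]; exact Finset.image_subset_image (Finset.subset_univ _)
  have hA2V : A2 ⊆ V₁ := by rw [hA2, hV₁]; exact Finset.image_subset_image (Finset.subset_univ _)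
  have hB1V : B1 ⊆ V₂ := by rw [hB1, hV₂]; exact Finset.image_subset_image (Finset.subset_univ _)
  have hB2V : B2 ⊆ V₂ := by rw [hB2, hV₂]; exact Finset.image_subset_image (Finset.subset_univ _)
  have hB3V : B3 ⊆ V₂ := by rw [hB3, hV₂]; exact Finset.image_subset_image (Finset.subset_univ _)
  have hdAA : Disjoint A1 A2 := by
    rw [hA1, hA2, Finset.disjoint_image (psi_inj φ₁)]; decide
  have hdBB1 : Disjoint B1 B2 := by
    rw [hB1, hB2, Finset.disjoint_image (psi_inj φ₂)]; decide
  have hdBB2 : Disjoint B1 B3 := by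
    rw [hB1, hB3, Finset.disjoint_image (psi_inj φ₂)]; decide
  have hdBB3 : Disjoint B2 B3 := by
    rw [hB2, hB3, Finset.disjoint_image (psi_inj φ₂)]; decide
  have hcross : ∀ X Y, X ⊆ V₁ → Y ⊆ V₂ → Disjoint X Y := by
    intro X Y hX hY
    exact Finset.disjoint_of_subset_left hX (Finset.disjoint_of_subset_right hY hdisjV)
  have hd13 := hcross A1 B1 hA1V hB1V
  have hd14 := hcross A1 B2 hA1V hB2V
  have hd15 := hcross A1 B3 hA1V hB3V
  have hd23 := hcross A2 B1 hA2V hB1V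
  have hd24 := hcross A2 B2 hA2V hB2V
  have hd25 := hcross A2 B3 hA2V hB3V
  have hne1 : A1.Nonempty := Finset.Nonempty.image (by decide) _
  have hne2 : A2.Nonempty := Finset.Nonempty.image (by decide) _
  have hne3 : B1.Nonempty := Finset.Nonempty.image (by decide) _
  have hne4 : B2.Nonempty := Finset.Nonempty.image (by decide) _
  have hne5 : B3.Nonempty := Finset.Nonempty.image (by decide) _
  have neOf : ∀ X Y : Finset (EuclideanSpace ℝ (Fin 2)), Disjoint X Y → X.Nonempty → X ≠ Y := by
    intro X Y hd hX heq
    subst heq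
    exact hX.ne_empty (by simpa using hd)
  have n12 := neOf _ _ hdAA hne1
  have n13 := neOf _ _ hd13 hne1
  have n14 := neOf _ _ hd14 hne1
  have n15 := neOf _ _ hd15 hne1
  have n23 := neOf _ _ hd23 hne2
  have n24 := neOf _ _ hd24 hne2
  have n25 := neOf _ _ hd25 hne2
  have n34 := neOf _ _ hdBB1 hne3
  have n35 := neOf _ _ hdBB2 hne3
  have n45 := neOf _ _ hdBB3 hne4
  refine ⟨{A1, A2, B1, B2, B3}, ⟨?_, ?_, ?_, ?_⟩, ?_⟩
  · intro C hC
    simp only [Finset.mem_insert, Finset.mem_singleton] at hC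
    rcases hC with rfl|rfl|rfl|rfl|rfl <;> assumption
  · intro x hx y hy hxy
    simp only [Finset.coe_insert, Finset.coe_singleton, Set.mem_insert_iff,
      Set.mem_singleton_iff] at hx hy
    have hdAA' := hdAA.symm
    have hdBB1' := hdBB1.symm
    have hdBB2' := hdBB2.symm
    have hdBB3' := hdBB3.symm
    have hd13' := hd13.symm
    have hd14' := hd14.symm
    have hd15' := hd15.symm
    have hd23' := hd23.symm
    have hd24' := hd24.symm
    have hd25' := hd25.symm
    simp only [Function.onFun, id_eq]
    rcases hx with rfl|rfl|rfl|rfl|rfl <;> rcases hy with rfl|rfl|rfl|rfl|rfl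
    exacts [absurd rfl hxy, hdAA, hd13, hd14, hd15,
      hdAA', absurd rfl hxy, hd23, hd24, hd25,
      hd13', hd23', absurd rfl hxy, hdBB1, hdBB2,
      hd14', hd24', hdBB1', absurd rfl hxy, hdBB3,
      hd15', hd25', hdBB2', hdBB3', absurd rfl hxy]
  · have : ({A1, A2, B1, B2, B3} : Finset (Finset (EuclideanSpace ℝ (Fin 2)))).sup id
        = A1 ∪ (A2 ∪ (B1 ∪ (B2 ∪ B3))) := by
      simp [Finset.sup_insert, Finset.sup_singleton]
    rw [this, ← Finset.union_assoc]
    have e1 : A1 ∪ A2 = V₁ := by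
      rw [hA1, hA2, ← Finset.image_union, hV₁]
      congr 1
    have e2 : B1 ∪ (B2 ∪ B3) = V₂ := by
      rw [hB1, hB2, hB3, ← Finset.image_union, ← Finset.image_union, hV₂]
      congr 1
    rw [e1, e2]
  · rw [Finset.card_insert_of_notMem (by simp only [Finset.mem_insert, Finset.mem_singleton]; push_neg; refine ⟨n12, n13, n14, n15⟩),
        Finset.card_insert_of_notMem (by simp only [Finset.mem_insert, Finset.mem_singleton]; push_neg; refine ⟨n23, n24, n25⟩),
        Finset.card_insert_of_notMem (by simp only [Finset.mem_insert, Finset.mem_singleton]; push_neg; refine ⟨n34, n35⟩),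
        Finset.card_insert_of_notMem (by simp only [Finset.mem_singleton]; exact n45),
        Finset.card_singleton]
  · rw [Finset.sum_insert (by simp only [Finset.mem_insert, Finset.mem_singleton]; push_neg; refine ⟨n12, n13, n14, n15⟩),
        Finset.sum_insert (by simp only [Finset.mem_insert, Finset.mem_singleton]; push_neg; refine ⟨n23, n24, n25⟩),
        Finset.sum_insert (by simp only [Finset.mem_insert, Finset.mem_singleton]; push_neg; refine ⟨n34, n35⟩),
        Finset.sum_insert (by simp only [Finset.mem_singleton]; exact n45),
        Finset.sum_singleton]
    rw [hA1, hA2, hB1, hB2, hB3, clusterCost_image φ₁, clusterCost_image φ₁,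
        clusterCost_image φ₂, clusterCost_image φ₂, clusterCost_image φ₂]
    rw [cost'_val _ 3 4 (by decide) (by decide),
        cost'_val _ 2 2 (by decide) (by decide),
        cost'_val _ 2 2 (by decide) (by decide),
        cost'_val _ 2 2 (by decide) (by decide),
        cost'_val _ 1 0 (by decide) (by decide)]
    norm_num
    ring

end Aux

open Finset in
/-- For two unit-side regular pentagons whose vertex sets are separated by a sufficiently
large distance `M`, the minimum total cost of a partition of the 10 points into at most 5
nonempty clusters equals `(16+√5)/6`. -/
theorem two_pentagons_integral_opt :
    ∃ M₀ : ℝ, M₀ > 0 ∧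
      ∀ M : ℝ, M ≥ M₀ →
        ∀ V₁ V₂ : Finset (EuclideanSpace ℝ (Fin 2)),
          IsUnitRegularPentagon V₁ → IsUnitRegularPentagon V₂ →
          (∀ p ∈ V₁, ∀ q ∈ V₂, ‖p - q‖ ≥ M) →
          IsLeast {t : ℝ | ∃ P : Finset (Finset (EuclideanSpace ℝ (Fin 2))),
              IsPartitionIntoAtMost (V₁ ∪ V₂) 5 P ∧ t = ∑ C ∈ P, clusterCost C}
            ((16 + Real.sqrt 5) / 6) := by
  have h5 : Real.sqrt 5 ^2 = 5 := Real.sq_sqrt (by norm_num)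
  have h5n : (0:ℝ) ≤ Real.sqrt 5 := Real.sqrt_nonneg 5
  refine ⟨10, by norm_num, ?_⟩
  intro M hM V₁ V₂ h₁ h₂ hsep
  obtain ⟨φ₁, hV₁⟩ := h₁
  obtain ⟨φ₂, hV₂⟩ := h₂
  have hdisjV : Disjoint V₁ V₂ := by
    rw [Finset.disjoint_left]
    intro p hp hq
    have := hsep p hp p hq
    simp only [sub_self, norm_zero] at this
    linarith
  constructor
  · obtain ⟨P, hP, hsum⟩ := upper_bound φ₁ φ₂ V₁ V₂ hV₁ hV₂ hdisjV
    exact ⟨P, hP, hsum.symm⟩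
  · rintro t ⟨P, ⟨hne, hdisj, hsup, hcard⟩, rfl⟩
    by_cases hcross : ∃ C ∈ P, ∃ p ∈ C, p ∈ V₁ ∧ ∃ q ∈ C, q ∈ V₂
    · obtain ⟨C, hC, p, hpC, hpV, q, hqC, hqV⟩ := hcross
      have hCsub : C ⊆ V₁ ∪ V₂ := by
        rw [← hsup]; exact Finset.le_sup (f := id) hC
      have hcV₁ : V₁.card = 5 := by
        rw [hV₁, Finset.card_image_of_injective _ (psi_inj φ₁)]; simp
      have hcV₂ : V₂.card = 5 := by
        rw [hV₂, Finset.card_image_of_injective _ (psi_inj φ₂)]; simp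
      have hCcard : (C.card:ℝ) ≤ 10 := by
        have h1 : C.card ≤ (V₁ ∪ V₂).card := Finset.card_le_card hCsub
        have h2 : (V₁ ∪ V₂).card ≤ 10 := by
          calc (V₁ ∪ V₂).card ≤ V₁.card + V₂.card := Finset.card_union_le _ _
            _ = 10 := by rw [hcV₁, hcV₂]
        exact_mod_cast le_trans h1 h2
      have hCpos : (0:ℝ) < C.card := by
        have : 0 < C.card := Finset.card_pos.mpr ⟨p, hpC⟩
        exact_mod_cast this
      have hpq : ‖p - q‖^2 ≥ 100 := by
        have h1 : ‖p - q‖ ≥ M := hsep p hpV q hqV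
        nlinarith
      have hsumC : ∑ p' ∈ C, ∑ q' ∈ C, ‖p' - q'‖^2 ≥ 100 := by
        have inner_nonneg : ∀ p' ∈ C, (0:ℝ) ≤ ∑ q' ∈ C, ‖p' - q'‖^2 := by
          intro p' _
          exact Finset.sum_nonneg (fun q' _ => by positivity)
        have h1 : ∑ q' ∈ C, ‖p - q'‖^2 ≥ ‖p - q‖^2 :=
          Finset.single_le_sum (f := fun q' => ‖p - q'‖^2) (fun i _ => by positivity) hqC
        have h2 : ∑ p' ∈ C, ∑ q' ∈ C, ‖p' - q'‖^2 ≥ ∑ q' ∈ C, ‖p - q'‖^2 :=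
          Finset.single_le_sum (f := fun p' => ∑ q' ∈ C, ‖p' - q'‖^2) inner_nonneg hpC
        linarith
      have hcostC : clusterCost C ≥ 5 := by
        unfold clusterCost
        have hfrac : (1:ℝ)/20 ≤ 1/(2*(C.card:ℝ)) := by
          apply one_div_le_one_div_of_le <;> linarith
        calc (5:ℝ) = (1/20) * 100 := by norm_num
          _ ≤ (1/20) * (∑ p' ∈ C, ∑ q' ∈ C, ‖p' - q'‖^2) := by
              apply mul_le_mul_of_nonneg_left (by linarith) (by norm_num)
          _ ≤ (1/(2*(C.card:ℝ))) * (∑ p' ∈ C, ∑ q' ∈ C, ‖p' - q'‖^2) := by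
              apply mul_le_mul_of_nonneg_right hfrac (by linarith)
      have htot : clusterCost C ≤ ∑ C' ∈ P, clusterCost C' :=
        Finset.single_le_sum (fun C' _ => clusterCost_nonneg C') hC
      nlinarith
    · push_neg at hcross
      have hsplit : ∀ C ∈ P, C ⊆ V₁ ∨ C ⊆ V₂ := by
        intro C hC
        have hCsub : C ⊆ V₁ ∪ V₂ := by
          rw [← hsup]; exact Finset.le_sup (f := id) hC
        by_cases hx : ∃ p ∈ C, p ∈ V₁
        · left
          obtain ⟨p, hpC, hpV⟩ := hx
          intro q hq
          rcases Finset.mem_union.mp (hCsub hq) with h | h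
          · exact h
          · exact absurd h (hcross C hC p hpC hpV q hq)
        · right
          push_neg at hx
          intro q hq
          rcases Finset.mem_union.mp (hCsub hq) with h | h
          · exact absurd h (hx q hq)
          · exact h
      classical
      set P₁ := P.filter (fun C => C ⊆ V₁) with hP₁
      set P₂ := P.filter (fun C => ¬ C ⊆ V₁) with hP₂
      have hP₁sub : ∀ C ∈ P₁, C ⊆ V₁ := fun C hC => (Finset.mem_filter.mp hC).2
      have hP₂sub : ∀ C ∈ P₂, C ⊆ V₂ := by
        intro C hC
        have h1 := (Finset.mem_filter.mp hC).1
        have h2 := (Finset.mem_filter.mp hC).2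
        rcases hsplit C h1 with h | h
        · exact absurd h h2
        · exact h
      have hsupP : P.sup id = V₁ ∪ V₂ := hsup
      have hsup₁ : P₁.sup id = V₁ := by
        apply le_antisymm
        · exact Finset.sup_le (fun C hC => hP₁sub C hC)
        · intro p hp
          have hpu : p ∈ P.sup id := by rw [hsupP]; exact Finset.mem_union_left _ hp
          obtain ⟨C, hCP, hpC⟩ := Finset.mem_sup.mp hpu
          rcases hsplit C hCP with h | h
          · exact Finset.mem_sup.mpr ⟨C, Finset.mem_filter.mpr ⟨hCP, h⟩, hpC⟩
          · exact absurd hp (Finset.disjoint_right.mp hdisjV (h hpC))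
      have hsup₂ : P₂.sup id = V₂ := by
        apply le_antisymm
        · exact Finset.sup_le (fun C hC => hP₂sub C hC)
        · intro q hq
          have hqu : q ∈ P.sup id := by rw [hsupP]; exact Finset.mem_union_right _ hq
          obtain ⟨C, hCP, hqC⟩ := Finset.mem_sup.mp hqu
          have hnot : ¬ C ⊆ V₁ := by
            intro hsub
            exact Finset.disjoint_left.mp hdisjV (hsub hqC) hq
          exact Finset.mem_sup.mpr ⟨C, Finset.mem_filter.mpr ⟨hCP, hnot⟩, hqC⟩
      have hV₁ne : V₁.Nonempty := ⟨φ₁ (pentagonVertex 0), by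
        rw [hV₁]; exact Finset.mem_image.mpr ⟨0, Finset.mem_univ 0, rfl⟩⟩
      have hV₂ne : V₂.Nonempty := ⟨φ₂ (pentagonVertex 0), by
        rw [hV₂]; exact Finset.mem_image.mpr ⟨0, Finset.mem_univ 0, rfl⟩⟩
      have hk₁ : 1 ≤ P₁.card := by
        obtain ⟨p, hp⟩ := hV₁ne
        have : p ∈ P₁.sup id := by rw [hsup₁]; exact hp
        obtain ⟨C, hC, _⟩ := Finset.mem_sup.mp this
        exact Finset.card_pos.mpr ⟨C, hC⟩
      have hk₂ : 1 ≤ P₂.card := by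
        obtain ⟨q, hq⟩ := hV₂ne
        have : q ∈ P₂.sup id := by rw [hsup₂]; exact hq
        obtain ⟨C, hC, _⟩ := Finset.mem_sup.mp this
        exact Finset.card_pos.mpr ⟨C, hC⟩
      have hksum : P₁.card + P₂.card ≤ 5 := by
        rw [Finset.card_filter_add_card_filter_not (p := fun C => C ⊆ V₁)]
        exact hcard
      have hne₁ : ∀ C ∈ P₁, C.Nonempty := fun C hC => hne C (Finset.mem_filter.mp hC).1
      have hne₂ : ∀ C ∈ P₂, C.Nonempty := fun C hC => hne C (Finset.mem_filter.mp hC).1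
      have hdisj₁ : (P₁ : Set (Finset (EuclideanSpace ℝ (Fin 2)))).PairwiseDisjoint id :=
        hdisj.subset (by intro x hx; exact (Finset.mem_filter.mp hx).1)
      have hdisj₂ : (P₂ : Set (Finset (EuclideanSpace ℝ (Fin 2)))).PairwiseDisjoint id :=
        hdisj.subset (by intro x hx; exact (Finset.mem_filter.mp hx).1)
      have hb₁ := pent_bound φ₁ P₁ hne₁ hdisj₁ (by rw [hsup₁, hV₁])
      have hb₂ := pent_bound φ₂ P₂ hne₂ hdisj₂ (by rw [hsup₂, hV₂])
      have hcomb := hfun_comb P₁.card P₂.card hk₁ hk₂ hksum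
      have hsum_split : ∑ C ∈ P, clusterCost C
          = ∑ C ∈ P₁, clusterCost C + ∑ C ∈ P₂, clusterCost C :=
        (Finset.sum_filter_add_sum_filter_not P _ _).symm
      rw [hsum_split]
      linarith
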